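/- For each day d ∈ {Tu, We, Th, Fr}, the axiom system 𝒜_d = {(Ax_{=1}), ⟨T ≤ d⟩} satisfies: (i) every r ≤ d is a model of 𝒜_d, hence K_{𝒜_d} = {Mo,...,d} and 𝒜_d is consistent; (ii) D_surpr^{𝒜_d} = {Mo,...,d−1}; and (iii) 𝒜_d does not prove the formula ([𝒜_d ⊢ ⟨T ≤ d⟩] → ⟨T ≠ d⟩). -/
import Mathlib


open scoped Classical

/-- Propositional formulas over the six variables `Y_r`, `r ∈ R = Fin 6`
(`0 = Mo, 1 = Tu, 2 = We, 3 = Th, 4 = Fr, 5 = none`). -/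
inductive Form : Type where
  | bot : Form
  | var : Fin 6 → Form
  | imp : Form → Form → Form
deriving DecidableEq

def Form.neg (φ : Form) : Form := φ.imp .bot
def Form.top : Form := Form.neg .bot
def Form.or (φ ψ : Form) : Form := φ.neg.imp ψ
def Form.and (φ ψ : Form) : Form := (φ.imp ψ.neg).neg

/-- Evaluation in the model `r ∈ R`: variable `Y_i` is true iff `i = r`. -/
def Form.eval (r : Fin 6) : Form → Bool
  | .bot => false
  | .var i => decide (i = r)
  | .imp φ ψ => !(Form.eval r φ) || Form.eval r ψ

/-- `r ⊨ φ`. -/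
def Sat (r : Fin 6) (φ : Form) : Prop := Form.eval r φ = true

def bigOr (l : List Form) : Form := l.foldr Form.or .bot
def bigAnd (l : List Form) : Form := l.foldr Form.and Form.top

/-- `χ_B = ⋁_{r ∈ B} Y_r`. -/
def chi (B : Finset (Fin 6)) : Form := bigOr ((B.sort (· ≤ ·)).map Form.var)

/-- The axiom `(Ax_{=1})`: exactly one of the variables `Y_r` is true. -/
def Ax1 : Form :=
  (chi Finset.univ).and
    (bigAnd ((List.finRange 6).flatMap (fun i =>
      (List.finRange 6).map (fun j =>
        if i = j then Form.top else ((Form.var i).neg).or ((Form.var j).neg)))))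

/-- Provability from the axiom system `A` (by soundness and completeness of
propositional logic, semantic consequence over the six models). -/
def Proves (A : Set Form) (φ : Form) : Prop :=
  ∀ r : Fin 6, (∀ ψ ∈ A, Sat r ψ) → Sat r φ

/-- `K` is an `A`-p-knowledge set: `A ⊢ ⟨T ∈ K⟩`. -/
def KSet (A : Set Form) (K : Finset (Fin 6)) : Prop := Proves A (chi K)

/-- `K_A`, the intersection of all `A`-p-knowledge sets. -/
noncomputable def KA (A : Set Form) : Finset (Fin 6) :=
  Finset.univ.filter (fun r => ∀ K : Finset (Fin 6), KSet A K → r ∈ K)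

/-- The days `D = {Mo,…,Fr}`. -/
def DaysF : Finset (Fin 6) := {0, 1, 2, 3, 4}

/-- `⟨T ≤ d⟩`. -/
def TLe (d : Fin 6) : Form := chi (Finset.univ.filter (· ≤ d))
/-- `⟨T ≥ d⟩`. -/
def TGe (d : Fin 6) : Form := chi (Finset.univ.filter (d ≤ ·))
/-- `⟨T = d⟩`. -/
def TEq (d : Fin 6) : Form := Form.var d

/-- Equivalence of axiom systems: mutual provability. -/
def EquivAx (A₁ A₂ : Set Form) : Prop :=
  (∀ φ ∈ A₂, Proves A₁ φ) ∧ (∀ φ ∈ A₁, Proves A₂ φ)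

/-- Iverson bracket: `⊤` if `P` holds, else `⊥`. -/
noncomputable def iver (P : Prop) : Form := if P then Form.top else Form.bot

/-- The maximum of `K` (with default `Mo` for `K = ∅`). -/
def maxD (K : Finset (Fin 6)) : Fin 6 := (K.max).getD 0

/-- `K ∖ {max K}` (with `∅ ∖ {max ∅} = ∅`). -/
def erasemax (K : Finset (Fin 6)) : Finset (Fin 6) := K.erase (maxD K)

/-- `σ^A := ⋀_{K ⊆ R} ([K_A ⊆ K] → χ_{K∖{max K}})`. -/
noncomputable def sigmaA (A : Set Form) : Form :=
  bigAnd (((Finset.univ : Finset (Finset (Fin 6))).toList).map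
    (fun K => (iver (KA A ⊆ K)).imp (chi (erasemax K))))

/-- The set of `A`-p-surprising days. -/
def Dsurpr (A : Set Form) : Set (Fin 6) :=
  {d | d ∈ DaysF ∧ d ∈ KA A ∧ ¬ Proves A (TLe d)}

/-- `A` is inconsistent iff it proves every formula. -/
def Inconsistent (A : Set Form) : Prop := ∀ φ, Proves A φ

/-- `τ^A := ⋁_{d ∈ D} ⋀_{K ⊆ R} ([A ⊢ χ_K] → [d ∈ K∖{max K}])`. -/
noncomputable def tauA (A : Set Form) : Form :=
  bigOr ((DaysF.sort (· ≤ ·)).map (fun d =>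
    bigAnd (((Finset.univ : Finset (Finset (Fin 6))).toList).map
      (fun K => (iver (Proves A (chi K))).imp (iver (d ∈ erasemax K))))))

/-- The axiom system `𝒜_L = {(Ax_{=1}), χ_L}`. -/
def AL (L : Finset (Fin 6)) : Set Form := {Ax1, chi L}

lemma eval_bigOr (r : Fin 6) (l : List Form) :
    Form.eval r (bigOr l) = l.any (Form.eval r) := by
  induction l with
  | nil => rfl
  | cons a t ih => simp [bigOr, Form.or, Form.neg, Form.eval, ih] at *

lemma sat_chi (r : Fin 6) (B : Finset (Fin 6)) : Sat r (chi B) ↔ r ∈ B := by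
  rw [Sat, chi, eval_bigOr]
  simp only [List.any_eq_true, List.mem_map, Finset.mem_sort, Form.eval,
    decide_eq_true_eq]
  constructor
  · rintro ⟨φ, ⟨i, hi, rfl⟩, h⟩
    simp only [Form.eval, decide_eq_true_eq] at h
    exact h ▸ hi
  · intro h
    exact ⟨Form.var r, ⟨r, h, rfl⟩, by simp [Form.eval]⟩

lemma sat_and (r : Fin 6) (φ ψ : Form) :
    Sat r (φ.and ψ) ↔ Sat r φ ∧ Sat r ψ := by
  simp only [Sat, Form.and, Form.neg, Form.eval]
  cases Form.eval r φ <;> cases Form.eval r ψ <;> simp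

lemma sat_TLe (r e : Fin 6) : Sat r (TLe e) ↔ r ≤ e := by
  rw [TLe, sat_chi]; simp

set_option maxRecDepth 100000 in
lemma sat_Ax1 (r : Fin 6) : Sat r Ax1 := by
  rw [Ax1, sat_and]
  refine ⟨(sat_chi r _).mpr (Finset.mem_univ r), ?_⟩
  revert r; unfold Sat; decide

lemma proves_pair_iff (a b φ : Form) :
    Proves {a, b} φ ↔ ∀ r, Sat r a → Sat r b → Sat r φ := by
  unfold Proves
  constructor
  · intro h r ha hb
    exact h r (fun ψ hψ => by rcases hψ with rfl | rfl <;> assumption)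
  · intro h r hall
    exact h r (hall a (Or.inl rfl)) (hall b (Or.inr rfl))

/-- Properties of `𝒜_d = {(Ax_{=1}), ⟨T ≤ d⟩}` for a day `d ∈ {Tu,We,Th,Fr}`:
every `r ≤ d` is a model of it, `K_{𝒜_d} = {Mo,…,d}`, it is consistent,
`D_surpr^{𝒜_d} = {Mo,…,d−1}`, and it does not prove
`[𝒜_d ⊢ ⟨T ≤ d⟩] → ⟨T ≠ d⟩`. -/
theorem stmt_10 (d : Fin 6) (hd : d ∈ ({1, 2, 3, 4} : Finset (Fin 6))) :
    (∀ r : Fin 6, r ≤ d → ∀ ψ ∈ ({Ax1, TLe d} : Set Form), Sat r ψ) ∧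
    KA {Ax1, TLe d} = Finset.univ.filter (· ≤ d) ∧
    ¬ Inconsistent {Ax1, TLe d} ∧
    Dsurpr {Ax1, TLe d} = ↑(Finset.univ.filter (· < d)) ∧
    ¬ Proves {Ax1, TLe d}
        ((iver (Proves {Ax1, TLe d} (TLe d))).imp (Form.var d).neg) := by
  have hP : Proves {Ax1, TLe d} (TLe d) := by
    intro r h; exact h (TLe d) (Or.inr rfl)
  have hKA : KA {Ax1, TLe d} = Finset.univ.filter (· ≤ d) := by
    ext r
    simp only [KA, Finset.mem_filter, Finset.mem_univ, true_and, KSet,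
      proves_pair_iff]
    constructor
    · intro h
      have := h (Finset.univ.filter (· ≤ d)) (fun r' _ h2 => by
        rw [sat_chi, Finset.mem_filter]
        exact ⟨Finset.mem_univ r', (sat_TLe r' d).mp h2⟩)
      simpa using this
    · intro hr K hK
      exact (sat_chi r K).mp (hK r (sat_Ax1 r) ((sat_TLe r d).mpr hr))
  refine ⟨?_, hKA, ?_, ?_, ?_⟩
  · intro r hr ψ hψ
    rcases hψ with rfl | rfl
    · exact sat_Ax1 r
    · exact (sat_TLe r d).mpr hr
  · intro h
    have h0 := (proves_pair_iff _ _ _).mp (h Form.bot) 0 (sat_Ax1 0)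
      ((sat_TLe 0 d).mpr (Fin.zero_le d))
    exact absurd h0 (by unfold Sat; simp [Form.eval])
  · ext r
    simp only [Dsurpr, Set.mem_setOf_eq, hKA, proves_pair_iff,
      Finset.coe_filter, Finset.mem_univ, true_and, Finset.mem_filter]
    constructor
    · rintro ⟨-, hr, hnp⟩
      rcases lt_or_eq_of_le hr with h | rfl
      · exact h
      · exact absurd (fun r' _ h2 => (sat_TLe r' r).mpr ((sat_TLe r' r).mp h2))
          hnp
    · intro hlt
      refine ⟨?_, le_of_lt hlt, fun hp => ?_⟩
      · have hd4 : d ≤ 4 := by fin_cases hd <;> decide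
        have : r < 5 := lt_of_lt_of_le hlt (le_trans hd4 (by decide))
        simp only [DaysF]
        fin_cases r <;> simp_all
      · have := (sat_TLe d r).mp (hp d (sat_Ax1 d) ((sat_TLe d d).mpr le_rfl))
        exact absurd this (not_le.mpr hlt)
  · have hiver : iver (Proves {Ax1, TLe d} (TLe d)) = Form.top := by
      simp [iver, hP]
    rw [hiver, proves_pair_iff]
    intro h
    have := h d (sat_Ax1 d) ((sat_TLe d d).mpr le_rfl)
    unfold Sat at this
    simp [Form.eval, Form.top, Form.neg] at this
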